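/- Let μ be a nonnegative Borel measure on [0, ∞) such that μ(I) > 0 for every nonempty open interval I ⊆ [0, ∞). Let y¹, y² : [0, ∞) → ℝ be càdlàg functions (right-continuous with left limits), and let y^i_{t−} denote the left limit of y^i at t (with y^i_{0−} := y^i_0). If y¹ = y² μ-almost everywhere, then y¹_{t−} = y²_{t−} for every t, and in particular y¹_{−} = y²_{−} μ-almost everywhere; conversely, if y¹_{−} = y²_{−} μ-almost everywhere then y¹ = y² μ-almost everywhere. -/

import Mathlib

open MeasureTheory Filter Set Topology

/-! A set of full `μ`-measure meets every interval `(t, t + δ)`, so an a.e. identity between two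
functions is visible along `𝓝[>] t`. Right-continuous functions that agree a.e. therefore agree on
all of `[0, ∞)`, and so have the same left limits. Conversely, the left limits of a càdlàg function
tend to its value from the right, so a.e.-equal left limits force equal values. -/

section Order

variable {α : Type*} [LinearOrder α] [TopologicalSpace α] [OrderTopology α] [NoMaxOrder α]

theorem frequently_nhdsGT_of_ae [MeasurableSpace α] {ν : Measure α} {t : α}
    (hν : ∀ b, t < b → ν (Ioo t b) ≠ 0) {p : α → Prop} (hp : ∀ᵐ x ∂ν, p x) :
    ∃ᶠ s in 𝓝[>] t, p s := by
  rw [(nhdsGT_basis t).frequently_iff]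
  intro b htb
  by_contra! hnp
  exact hν b htb (measure_mono_null hnp (ae_iff.mp hp))

theorem tendsto_nhdsGT_of_tendsto_nhdsLT [DenselyOrdered α] [NoMinOrder α]
    {X : Type*} [TopologicalSpace X] [RegularSpace X] {f l : α → X} {t : α} {a : X}
    (hf : Tendsto f (𝓝[>] t) (𝓝 a)) (hl : ∀ s, t < s → Tendsto f (𝓝[<] s) (𝓝 (l s))) :
    Tendsto l (𝓝[>] t) (𝓝 a) := by
  refine (closed_nhds_basis a).tendsto_right_iff.mpr fun V ⟨hVa, hVc⟩ => ?_
  obtain ⟨u, htu, hfV⟩ := mem_nhdsGT_iff_exists_Ioo_subset.mp (hf hVa)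
  filter_upwards [Ioo_mem_nhdsGT htu] with s hs
  refine hVc.mem_of_tendsto (hl s hs.1) ?_
  filter_upwards [Ioo_mem_nhdsLT hs.1] with x hx
  exact hfV ⟨hx.1, hx.2.trans hs.2⟩

end Order

theorem frequently_nhdsGT_of_ae_restrict_Ici {μ : Measure ℝ}
    (hμ : ∀ a b : ℝ, 0 ≤ a → a < b → 0 < μ (Ioo a b)) {t : ℝ} (ht : 0 ≤ t) {p : ℝ → Prop}
    (hp : ∀ᵐ x ∂μ.restrict (Ici 0), p x) : ∃ᶠ s in 𝓝[>] t, p s := by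
  refine frequently_nhdsGT_of_ae (fun b htb => ?_) hp
  rw [Measure.restrict_apply measurableSet_Ioo,
    inter_eq_left.mpr (show Ioo t b ⊆ Ici 0 from fun x hx => ht.trans hx.1.le)]
  exact (hμ t b ht htb).ne'

theorem eqOn_Ici_of_ae_eq_of_tendsto_nhdsGT {μ : Measure ℝ}
    (hμ : ∀ a b : ℝ, 0 ≤ a → a < b → 0 < μ (Ioo a b)) {f₁ f₂ g₁ g₂ : ℝ → ℝ}
    (hf : f₁ =ᵐ[μ.restrict (Ici 0)] f₂) (h₁ : ∀ t, 0 ≤ t → Tendsto f₁ (𝓝[>] t) (𝓝 (g₁ t)))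
    (h₂ : ∀ t, 0 ≤ t → Tendsto f₂ (𝓝[>] t) (𝓝 (g₂ t))) : EqOn g₁ g₂ (Ici 0) := fun t ht =>
  tendsto_nhds_unique_of_frequently_eq (h₁ t ht) (h₂ t ht)
    (frequently_nhdsGT_of_ae_restrict_Ici hμ ht hf)

theorem tendsto_nhdsGT_of_right_continuous {y : ℝ → ℝ}
    (hrc : ∀ t : ℝ, 0 ≤ t → Tendsto y (𝓝[≥] t) (𝓝 (y t))) {t : ℝ} (ht : 0 ≤ t) :
    Tendsto y (𝓝[>] t) (𝓝 (y t)) :=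
  tendsto_nhdsWithin_mono_left Ioi_subset_Ici_self (hrc t ht)

theorem tendsto_left_limit_nhdsGT {y l : ℝ → ℝ}
    (hrc : ∀ t : ℝ, 0 ≤ t → Tendsto y (𝓝[≥] t) (𝓝 (y t)))
    (hll : ∀ t : ℝ, 0 < t → Tendsto y (𝓝[Ico 0 t] t) (𝓝 (l t))) {t : ℝ} (ht : 0 ≤ t) :
    Tendsto l (𝓝[>] t) (𝓝 (y t)) :=
  tendsto_nhdsGT_of_tendsto_nhdsLT (tendsto_nhdsGT_of_right_continuous hrc ht) fun s hs =>
    nhdsWithin_Ico_eq_nhdsLT (ht.trans_lt hs) ▸ hll s (ht.trans_lt hs)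

theorem left_limits_eqOn_Ici {y₁ y₂ l₁ l₂ : ℝ → ℝ}
    (hll₁ : ∀ t : ℝ, 0 < t → Tendsto y₁ (𝓝[Ico 0 t] t) (𝓝 (l₁ t)))
    (hll₂ : ∀ t : ℝ, 0 < t → Tendsto y₂ (𝓝[Ico 0 t] t) (𝓝 (l₂ t)))
    (hl₁0 : l₁ 0 = y₁ 0) (hl₂0 : l₂ 0 = y₂ 0) (hy : EqOn y₁ y₂ (Ici 0)) :
    EqOn l₁ l₂ (Ici 0) := by
  intro t (ht : 0 ≤ t)
  rcases ht.eq_or_lt with rfl | ht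
  · rw [hl₁0, hl₂0, hy self_mem_Ici]
  · have h₁ := hll₁ t ht
    have h₂ := hll₂ t ht
    rw [nhdsWithin_Ico_eq_nhdsLT ht] at h₁ h₂
    refine tendsto_nhds_unique_of_eventuallyEq h₁ h₂ ?_
    filter_upwards [Ico_mem_nhdsLT ht] with s hs using hy hs.1

theorem cadlag_ae_eq_iff_left_limits
    (μ : Measure ℝ)
    (hμ : ∀ a b : ℝ, 0 ≤ a → a < b → 0 < μ (Set.Ioo a b))
    (y₁ y₂ l₁ l₂ : ℝ → ℝ)
    (hrc₁ : ∀ t : ℝ, 0 ≤ t → Tendsto y₁ (nhdsWithin t (Set.Ici t)) (nhds (y₁ t)))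
    (hrc₂ : ∀ t : ℝ, 0 ≤ t → Tendsto y₂ (nhdsWithin t (Set.Ici t)) (nhds (y₂ t)))
    (hll₁ : ∀ t : ℝ, 0 < t → Tendsto y₁ (nhdsWithin t (Set.Ico 0 t)) (nhds (l₁ t)))
    (hll₂ : ∀ t : ℝ, 0 < t → Tendsto y₂ (nhdsWithin t (Set.Ico 0 t)) (nhds (l₂ t)))
    (hl₁0 : l₁ 0 = y₁ 0) (hl₂0 : l₂ 0 = y₂ 0) :
    ((y₁ =ᵐ[μ.restrict (Set.Ici 0)] y₂) → ∀ t : ℝ, 0 ≤ t → l₁ t = l₂ t) ∧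
    ((y₁ =ᵐ[μ.restrict (Set.Ici 0)] y₂) → l₁ =ᵐ[μ.restrict (Set.Ici 0)] l₂) ∧
    ((l₁ =ᵐ[μ.restrict (Set.Ici 0)] l₂) → y₁ =ᵐ[μ.restrict (Set.Ici 0)] y₂) := by
  have values_eq (hy : y₁ =ᵐ[μ.restrict (Ici 0)] y₂) : EqOn y₁ y₂ (Ici 0) :=
    eqOn_Ici_of_ae_eq_of_tendsto_nhdsGT hμ hy
      (fun _ => tendsto_nhdsGT_of_right_continuous hrc₁)
      (fun _ => tendsto_nhdsGT_of_right_continuous hrc₂)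
  have left_limits_eq (hy : y₁ =ᵐ[μ.restrict (Ici 0)] y₂) : EqOn l₁ l₂ (Ici 0) :=
    left_limits_eqOn_Ici hll₁ hll₂ hl₁0 hl₂0 (values_eq hy)
  have values_eq_of_left_limits (hl : l₁ =ᵐ[μ.restrict (Ici 0)] l₂) : EqOn y₁ y₂ (Ici 0) :=
    eqOn_Ici_of_ae_eq_of_tendsto_nhdsGT hμ hl
      (fun _ => tendsto_left_limit_nhdsGT hrc₁ hll₁)
      (fun _ => tendsto_left_limit_nhdsGT hrc₂ hll₂)
  exact ⟨left_limits_eq, fun hy => (left_limits_eq hy).aeEq_restrict measurableSet_Ici,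
    fun hl => (values_eq_of_left_limits hl).aeEq_restrict measurableSet_Ici⟩
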